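/- Let X = X1'·X2·X3'' be a stationary point of the low-rank approximation problem on the fixed TT-rank (r1,r2) manifold, where A has TT-rank (r1',r2') with r1 ≤ r1' and r2 ≤ r2'. Then ∇f(X) = X − A has TT-rank at most (r1' , r2'), i.e., rank((X−A)^L) ≤ r1' and rank((X−A)^R) ≤ r2'. -/
import Mathlib


open Matrix Kronecker

/-- Left unfolding of a third-order tensor (column-major convention:
the second mode index varies fastest in the column index `(c, b)`). -/
def tL {a b c : ℕ} (X : Fin a → Fin b → Fin c → ℝ) : Matrix (Fin a) (Fin c × Fin b) ℝ :=
  Matrix.of fun i p => X i p.2 p.1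

/-- Right unfolding of a third-order tensor (the first mode index varies
fastest in the row index `(b, a)`). -/
def tR {a b c : ℕ} (X : Fin a → Fin b → Fin c → ℝ) : Matrix (Fin b × Fin a) (Fin c) ℝ :=
  Matrix.of fun p k => X p.2 p.1 k

/-- Tensor-train product `X1 · X2 · X3` of a matrix, a core tensor and a matrix. -/
def tt {a r1 b r2 c : ℕ} (X1 : Matrix (Fin a) (Fin r1) ℝ) (X2 : Fin r1 → Fin b → Fin r2 → ℝ)
    (X3 : Matrix (Fin r2) (Fin c) ℝ) : Fin a → Fin b → Fin c → ℝ :=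
  fun i j k => ∑ p : Fin r1, ∑ q : Fin r2, X1 i p * X2 p j q * X3 q k

/-- Euclidean inner product of (the vectorizations of) two third-order tensors. -/
def tinner {a b c : ℕ} (Y Z : Fin a → Fin b → Fin c → ℝ) : ℝ :=
  ∑ i, ∑ j, ∑ k, Y i j k * Z i j k

/-- Contraction of a matrix with a tensor on the first mode: `M · Y`. -/
def m1 {a a' b c : ℕ} (M : Matrix (Fin a) (Fin a') ℝ) (Y : Fin a' → Fin b → Fin c → ℝ) :
    Fin a → Fin b → Fin c → ℝ := fun i j k => ∑ p, M i p * Y p j k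

/-- Contraction of a tensor with a matrix on the third mode: `Y · N`. -/
def m3 {a b c c' : ℕ} (Y : Fin a → Fin b → Fin c → ℝ) (N : Matrix (Fin c) (Fin c') ℝ) :
    Fin a → Fin b → Fin c' → ℝ := fun i j k => ∑ p, Y i j p * N p k

/-- Inverse of the left unfolding: reshape a matrix back into a tensor. -/
def unL {a b c : ℕ} (M : Matrix (Fin a) (Fin c × Fin b) ℝ) : Fin a → Fin b → Fin c → ℝ :=
  fun i j k => M i (k, j)

lemma tL_tt {a r1 b r2 c : ℕ} (X1 : Matrix (Fin a) (Fin r1) ℝ) (X2 : Fin r1 → Fin b → Fin r2 → ℝ)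
    (X3 : Matrix (Fin r2) (Fin c) ℝ) : tL (tt X1 X2 X3) = X1 * tL (m3 X2 X3) := by
  ext i p
  simp [tL, tt, m3, Matrix.mul_apply, Finset.mul_sum, mul_assoc]

lemma tR_tt {a r1 b r2 c : ℕ} (X1 : Matrix (Fin a) (Fin r1) ℝ) (X2 : Fin r1 → Fin b → Fin r2 → ℝ)
    (X3 : Matrix (Fin r2) (Fin c) ℝ) : tR (tt X1 X2 X3) = tR (m1 X1 X2) * X3 := by
  ext p k
  simp only [tR, tt, m1, Matrix.mul_apply, Matrix.of_apply, Finset.sum_mul]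
  rw [Finset.sum_comm]

lemma sum3_rev {a b c : ℕ} (f : Fin a → Fin b → Fin c → ℝ) :
    ∑ i, ∑ j, ∑ k, f i j k = ∑ k, ∑ j, ∑ i, f i j k := by
  calc ∑ i, ∑ j, ∑ k, f i j k
      = ∑ i, ∑ k, ∑ j, f i j k := Finset.sum_congr rfl fun i _ => Finset.sum_comm
    _ = ∑ k, ∑ i, ∑ j, f i j k := Finset.sum_comm
    _ = ∑ k, ∑ j, ∑ i, f i j k := Finset.sum_congr rfl fun k _ => Finset.sum_comm

lemma tinner_trL {a b c : ℕ} (Y Z : Fin a → Fin b → Fin c → ℝ) :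
    tinner Y Z = Matrix.trace (tL Y * (tL Z)ᵀ) := by
  simp only [tinner, Matrix.trace, Matrix.diag, Matrix.mul_apply, Matrix.transpose_apply, tL,
    Matrix.of_apply, Fintype.sum_prod_type]
  refine Finset.sum_congr rfl fun i _ => ?_
  rw [Finset.sum_comm]

lemma tinner_trR {a b c : ℕ} (Y Z : Fin a → Fin b → Fin c → ℝ) :
    tinner Y Z = Matrix.trace ((tR Y)ᵀ * tR Z) := by
  simp only [tinner, Matrix.trace, Matrix.diag, Matrix.mul_apply, Matrix.transpose_apply, tR,
    Matrix.of_apply, Fintype.sum_prod_type]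
  exact sum3_rev _

lemma ortho_row {r c : ℕ} (X3 : Matrix (Fin r) (Fin c) ℝ) (h3 : X3 * X3ᵀ = 1)
    (u v : Fin r → ℝ) :
    ∑ k, (∑ q, u q * X3 q k) * (∑ q, v q * X3 q k) = ∑ q, u q * v q := by
  have : ∑ k, (∑ q, u q * X3 q k) * (∑ q, v q * X3 q k)
      = (u ᵥ* X3) ⬝ᵥ (X3ᵀ *ᵥ v) := by
    simp [Matrix.vecMul, Matrix.mulVec, dotProduct, Matrix.transpose_apply, mul_comm]
  rw [this, Matrix.dotProduct_mulVec, Matrix.vecMul_vecMul, h3, Matrix.vecMul_one]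
  simp [dotProduct]

lemma DDt {r1 b r2 c : ℕ} (X2 : Fin r1 → Fin b → Fin r2 → ℝ) (X3 : Matrix (Fin r2) (Fin c) ℝ)
    (h3 : X3 * X3ᵀ = 1) (h2 : tL X2 * (tL X2)ᵀ = 1) :
    tL (m3 X2 X3) * (tL (m3 X2 X3))ᵀ = 1 := by
  rw [← h2]
  ext p p'
  simp only [Matrix.mul_apply, Matrix.transpose_apply, tL, m3, Matrix.of_apply,
    Fintype.sum_prod_type]
  conv_lhs => rw [Finset.sum_comm]
  conv_rhs => rw [Finset.sum_comm]
  exact Finset.sum_congr rfl fun j _ => ortho_row X3 h3 _ _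

lemma EtE {n r1 b r2 : ℕ} (X1 : Matrix (Fin n) (Fin r1) ℝ) (X2 : Fin r1 → Fin b → Fin r2 → ℝ)
    (h1 : X1ᵀ * X1 = 1) (h2 : (tR X2)ᵀ * tR X2 = 1) :
    (tR (m1 X1 X2))ᵀ * tR (m1 X1 X2) = 1 := by
  rw [← h2]
  ext q q'
  simp only [Matrix.mul_apply, Matrix.transpose_apply, tR, m1, Matrix.of_apply,
    Fintype.sum_prod_type]
  refine Finset.sum_congr rfl fun j _ => ?_
  have := ortho_row X1ᵀ (by rwa [Matrix.transpose_transpose]) (fun p => X2 p j q) (fun p => X2 p j q')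
  simpa [Matrix.transpose_apply, mul_comm] using this

lemma trace_self_zero {a b : ℕ} (M : Matrix (Fin a) (Fin b) ℝ)
    (h : Matrix.trace (M * Mᵀ) = 0) : M = 0 := by
  have h' : ∑ i, ∑ j, M i j * M i j = 0 := by
    simpa [Matrix.trace, Matrix.diag, Matrix.mul_apply, Matrix.transpose_apply] using h
  ext i j
  have h1 : ∀ i ∈ Finset.univ, (0:ℝ) ≤ ∑ j, M i j * M i j :=
    fun _ _ => Finset.sum_nonneg fun _ _ => mul_self_nonneg _
  rw [Finset.sum_eq_zero_iff_of_nonneg h1] at h'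
  have h2 := h' i (Finset.mem_univ i)
  rw [Finset.sum_eq_zero_iff_of_nonneg (fun _ _ => mul_self_nonneg _)] at h2
  simpa using mul_self_eq_zero.mp (h2 j (Finset.mem_univ j))

lemma tt_zero1 {a r1 b r2 c : ℕ} (X2 : Fin r1 → Fin b → Fin r2 → ℝ)
    (X3 : Matrix (Fin r2) (Fin c) ℝ) : tt (0 : Matrix (Fin a) (Fin r1) ℝ) X2 X3 = 0 := by
  funext i j k; simp [tt]

lemma tt_zero2 {a r1 b r2 c : ℕ} (X1 : Matrix (Fin a) (Fin r1) ℝ)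
    (X3 : Matrix (Fin r2) (Fin c) ℝ) : tt X1 (0 : Fin r1 → Fin b → Fin r2 → ℝ) X3 = 0 := by
  funext i j k; simp [tt]

lemma tt_zero3 {a r1 b r2 c : ℕ} (X1 : Matrix (Fin a) (Fin r1) ℝ)
    (X2 : Fin r1 → Fin b → Fin r2 → ℝ) : tt X1 X2 (0 : Matrix (Fin r2) (Fin c) ℝ) = 0 := by
  funext i j k; simp [tt]

lemma tL_sub {a b c : ℕ} (X Y : Fin a → Fin b → Fin c → ℝ) : tL (X - Y) = tL X - tL Y := rfl
lemma tR_sub {a b c : ℕ} (X Y : Fin a → Fin b → Fin c → ℝ) : tR (X - Y) = tR X - tR Y := rfl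

theorem stmt19 {n1 n2 n3 r1 r2 r1' r2' : ℕ}
    (X1' X1 : Matrix (Fin n1) (Fin r1) ℝ)
    (X2 X2' X2'' : Fin r1 → Fin n2 → Fin r2 → ℝ)
    (X3'' X3 : Matrix (Fin r2) (Fin n3) ℝ)
    (A1' : Matrix (Fin n1) (Fin r1') ℝ) (A2 : Fin r1' → Fin n2 → Fin r2' → ℝ)
    (A3'' : Matrix (Fin r2') (Fin n3) ℝ) (A : Fin n1 → Fin n2 → Fin n3 → ℝ)
    (hA : A = tt A1' A2 A3'')
    (h1 : X1'ᵀ * X1' = 1) (h3 : X3'' * X3''ᵀ = 1)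
    (h2' : (tR X2')ᵀ * tR X2' = 1) (h2'' : tL X2'' * (tL X2'')ᵀ = 1)
    (hfac1 : tt X1' X2 X3'' = tt X1' X2' X3)
    (hfac2 : tt X1' X2 X3'' = tt X1 X2'' X3'')
    (hA1 : A1'ᵀ * A1' = 1) (hA3 : A3'' * A3''ᵀ = 1)
    (hrkL : (tL (tt X1' X2 X3'')).rank = r1) (hrkR : (tR (tt X1' X2 X3'')).rank = r2)
    (hArkL : (tL A).rank = r1') (hArkR : (tR A).rank = r2')
    (hr1 : r1 ≤ r1') (hr2 : r2 ≤ r2')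
    (hstat : ∀ (W1 : Matrix (Fin n1) (Fin r1) ℝ) (W2 : Fin r1 → Fin n2 → Fin r2 → ℝ)
        (W3 : Matrix (Fin r2) (Fin n3) ℝ),
        tinner (tt X1' X2 X3'' - A)
          (tt X1' X2' W3 + tt X1' W2 X3'' + tt W1 X2'' X3'') = 0) :
    (tL (tt X1' X2 X3'' - A)).rank ≤ r1' ∧ (tR (tt X1' X2 X3'' - A)).rank ≤ r2' := by
  set G := tt X1' X2 X3'' - A with hG
  -- Left part
  set D := tL (m3 X2'' X3'') with hD
  have hDD : D * Dᵀ = 1 := DDt _ _ h3 h2''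
  have hML : tL G * Dᵀ = 0 := by
    apply trace_self_zero
    have hst := hstat (tL G * Dᵀ) 0 0
    rw [tt_zero2, tt_zero3, add_zero, zero_add] at hst
    rw [tinner_trL, tL_tt] at hst
    have e : tL G * ((tL G * Dᵀ) * D)ᵀ = (tL G * Dᵀ) * (tL G * Dᵀ)ᵀ := by
      simp [Matrix.transpose_mul, Matrix.mul_assoc]
    rw [e] at hst
    exact hst
  have hXL : tL (tt X1' X2 X3'') = X1 * D := by rw [hfac2, tL_tt]
  have hAL : tL A = A1' * tL (m3 A2 A3'') := by rw [hA, tL_tt]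
  have hsub : tL (tt X1' X2 X3'') * Dᵀ = tL A * Dᵀ := by
    have := hML
    rw [hG, tL_sub, Matrix.sub_mul, sub_eq_zero] at this
    exact this
  have hX1 : X1 = tL A * Dᵀ := by
    calc X1 = X1 * (D * Dᵀ) := by rw [hDD, Matrix.mul_one]
      _ = tL (tt X1' X2 X3'') * Dᵀ := by rw [← Matrix.mul_assoc, ← hXL]
      _ = tL A * Dᵀ := hsub
  have hGL : tL G = A1' * (tL (m3 A2 A3'') * (Dᵀ * D) - tL (m3 A2 A3'')) := by
    rw [hG, tL_sub, hXL, hX1, hAL, Matrix.mul_sub]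
    congr 1
    simp [Matrix.mul_assoc]
  -- Right part
  set E := tR (m1 X1' X2') with hE
  have hEE : Eᵀ * E = 1 := EtE _ _ h1 h2'
  have hMR : (tR G)ᵀ * E = 0 := by
    apply trace_self_zero
    have hst := hstat 0 0 ((tR G)ᵀ * E)ᵀ
    rw [tt_zero2, tt_zero1, add_zero, add_zero] at hst
    rw [tinner_trR, tR_tt] at hst
    have e : (tR G)ᵀ * (E * ((tR G)ᵀ * E)ᵀ) = ((tR G)ᵀ * E) * ((tR G)ᵀ * E)ᵀ := by
      simp [Matrix.transpose_mul, Matrix.mul_assoc]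
    rw [e] at hst
    exact hst
  have hMR' : Eᵀ * tR G = 0 := by
    have := congrArg Matrix.transpose hMR
    simpa [Matrix.transpose_mul] using this
  have hXR : tR (tt X1' X2 X3'') = E * X3 := by rw [hfac1, tR_tt]
  have hAR : tR A = tR (m1 A1' A2) * A3'' := by rw [hA, tR_tt]
  have hsubR : Eᵀ * tR (tt X1' X2 X3'') = Eᵀ * tR A := by
    have := hMR'
    rw [hG, tR_sub, Matrix.mul_sub, sub_eq_zero] at this
    exact this
  have hX3 : X3 = Eᵀ * tR A := by
    calc X3 = (Eᵀ * E) * X3 := by rw [hEE, Matrix.one_mul]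
      _ = Eᵀ * tR (tt X1' X2 X3'') := by rw [Matrix.mul_assoc, ← hXR]
      _ = Eᵀ * tR A := hsubR
  have hGR : tR G = ((E * Eᵀ) * tR (m1 A1' A2) - tR (m1 A1' A2)) * A3'' := by
    rw [hG, tR_sub, hXR, hX3, hAR, Matrix.sub_mul]
    congr 1
    simp [Matrix.mul_assoc]
  constructor
  · calc (tL G).rank = (A1' * (tL (m3 A2 A3'') * (Dᵀ * D) - tL (m3 A2 A3''))).rank := by rw [hGL]
      _ ≤ A1'.rank := Matrix.rank_mul_le_left _ _
      _ ≤ r1' := by simpa using Matrix.rank_le_card_width A1'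
  · calc (tR G).rank = (((E * Eᵀ) * tR (m1 A1' A2) - tR (m1 A1' A2)) * A3'').rank := by rw [hGR]
      _ ≤ A3''.rank := Matrix.rank_mul_le_right _ _
      _ ≤ r2' := by simpa using Matrix.rank_le_card_height A3''
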